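/- The series ∑_{n=1}^∞ 3/(n²·C(2n,n)) and ∑_{n=1}^∞ 1/n² have the same limit. -/

import Mathlib

/-! The Beta integral `∫₀¹ x ^ (n - 1) (1 - x) ^ n dx = (n - 1)! n! / (2n)!` writes the `n`-th term
`1 / (n² C(2n, n))` as `∫₀¹ (x (1 - x)) ^ n / (n x) dx`, so the series without the factor `3` is
`∫₀¹ -log (1 - x (1 - x)) / x dx`. Since `1 - x + x² = (1 + x³) / (1 + x)`, the integrand is also
`(log (1 + x) - log (1 + x³)) / x`; expanding both logarithms and integrating termwise gives
`(2/3) ∑ (-1) ^ (n - 1) / n²`, and this alternating sum is half of `∑ 1 / n²`. -/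

open MeasureTheory Real Set
open scoped Nat

theorem hasSum_setIntegral_of_summable_integral_norm {α E : Type*} [MeasurableSpace α]
    [NormedAddCommGroup E] [NormedSpace ℝ E] {μ : Measure α} {s : Set α} (hs : MeasurableSet s)
    {F : ℕ → α → E} {f : α → E} (hF_int : ∀ n, IntegrableOn (F n) s μ)
    (hF_sum : Summable fun n ↦ ∫ a in s, ‖F n a‖ ∂μ)
    (hf : ∀ a ∈ s, HasSum (fun n ↦ F n a) (f a)) :
    HasSum (fun n ↦ ∫ a in s, F n a ∂μ) (∫ a in s, f a ∂μ) := by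
  rw [setIntegral_congr_fun hs fun a ha ↦ (hf a ha).tsum_eq.symm]
  exact hasSum_integral_of_summable_integral_norm hF_int hF_sum

theorem integral_pow_mul_one_sub_pow_succ (a b : ℕ) :
    (a + 1 : ℝ) * ∫ x in (0 : ℝ)..1, x ^ a * (1 - x) ^ (b + 1) =
      (b + 1) * ∫ x in (0 : ℝ)..1, x ^ (a + 1) * (1 - x) ^ b := by
  have hderiv : ∀ x ∈ uIcc (0 : ℝ) 1, HasDerivAt (fun x ↦ x ^ (a + 1) * (1 - x) ^ (b + 1))
      ((a + 1) * (x ^ a * (1 - x) ^ (b + 1)) - (b + 1) * (x ^ (a + 1) * (1 - x) ^ b)) x := by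
    intro x _
    refine ((hasDerivAt_pow (a + 1) x).fun_mul
      (((hasDerivAt_id x).const_sub 1).fun_pow (b + 1))).congr_deriv ?_
    simp only [id, Nat.cast_add, Nat.cast_one, add_tsub_cancel_right]
    ring
  have hFTC := intervalIntegral.integral_eq_sub_of_hasDerivAt hderiv
    ((Continuous.intervalIntegrable (by fun_prop)) _ _)
  rw [intervalIntegral.integral_sub ((Continuous.intervalIntegrable (by fun_prop)) _ _)
    ((Continuous.intervalIntegrable (by fun_prop)) _ _),
    intervalIntegral.integral_const_mul, intervalIntegral.integral_const_mul] at hFTC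
  simp only [one_pow, sub_self, zero_pow (Nat.succ_ne_zero _), mul_zero, zero_mul,
    sub_zero] at hFTC
  linarith

theorem integral_pow_mul_one_sub_pow (a b : ℕ) :
    ∫ x in (0 : ℝ)..1, x ^ a * (1 - x) ^ b = a ! * b ! / (a + b + 1)! := by
  induction b generalizing a with
  | zero =>
    simp only [pow_zero, mul_one, integral_pow, one_pow, zero_pow a.succ_ne_zero, sub_zero,
      Nat.factorial_zero, Nat.cast_one, add_zero, Nat.factorial_succ, Nat.cast_mul]
    push_cast
    field_simp
  | succ b ih =>
    have h := integral_pow_mul_one_sub_pow_succ a b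
    rw [ih, show a + 1 + b + 1 = a + (b + 1) + 1 by omega] at h
    rw [eq_div_iff (by positivity)]
    have ha : (a + 1 : ℝ) ≠ 0 := by positivity
    apply mul_left_cancel₀ ha
    rw [← mul_assoc, h, Nat.factorial_succ a, Nat.factorial_succ b]
    field_simp
    push_cast
    ring

theorem setIntegral_pow_mul_one_sub_pow_succ_div (n : ℕ) :
    ∫ x in Ioo (0 : ℝ) 1, x ^ n * (1 - x) ^ (n + 1) / (n + 1) =
      1 / ((n + 1) ^ 2 * (2 * (n + 1)).choose (n + 1)) := by
  rw [← integral_Ioc_eq_integral_Ioo, ← intervalIntegral.integral_of_le zero_le_one,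
    intervalIntegral.integral_div, integral_pow_mul_one_sub_pow,
    show n + (n + 1) + 1 = 2 * (n + 1) by omega]
  have hchoose := Nat.choose_mul_factorial_mul_factorial (Nat.le_mul_of_pos_left (n + 1) two_pos)
  rw [show 2 * (n + 1) - (n + 1) = n + 1 by omega] at hchoose
  rw [← hchoose, Nat.factorial_succ n]
  push_cast
  field_simp

theorem log_one_add_pow_three {x : ℝ} (hx : x ≠ -1) :
    log (1 + x ^ 3) = log (1 + x) + log (1 - x * (1 - x)) := by
  have h1 : 1 + x ≠ 0 := fun h ↦ hx (by linarith)
  have h2 : 1 - x * (1 - x) ≠ 0 := by nlinarith [sq_nonneg (x - 1 / 2)]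
  rw [← log_mul h1 h2]
  ring_nf

theorem hasSum_log_one_add {x : ℝ} (hx : |x| < 1) :
    HasSum (fun n : ℕ ↦ (-1) ^ n * (x ^ (n + 1) / (n + 1))) (log (1 + x)) := by
  have h := (hasSum_pow_div_log_of_abs_lt_one (x := -x) (by rwa [abs_neg])).neg
  rw [neg_neg, sub_neg_eq_add] at h
  refine h.congr_fun fun n ↦ ?_
  rw [neg_pow, pow_succ]
  ring

theorem hasSum_pow_mul_one_sub_pow_succ_div {x : ℝ} (hx₀ : x ≠ 0) (hx : |x * (1 - x)| < 1) :
    HasSum (fun n : ℕ ↦ x ^ n * (1 - x) ^ (n + 1) / (n + 1)) (-log (1 - x * (1 - x)) / x) := by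
  refine ((hasSum_pow_div_log_of_abs_lt_one hx).div_const x).congr_fun fun n ↦ ?_
  rw [mul_pow]
  field_simp
  ring

theorem hasSum_neg_one_pow_mul_pow_sub_pow_div {x : ℝ} (hx₀ : x ≠ 0) (hx : |x| < 1) :
    HasSum (fun k : ℕ ↦ (-1) ^ k * ((x ^ k - x ^ (3 * k + 2)) / (k + 1)))
      (-log (1 - x * (1 - x)) / x) := by
  have hx3 : |x ^ 3| < 1 := by rw [abs_pow]; exact pow_lt_one₀ (abs_nonneg x) hx (by norm_num)
  have hne : x ≠ -1 := fun h ↦ by simp [h] at hx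
  have h := ((hasSum_log_one_add hx).sub (hasSum_log_one_add hx3)).div_const x
  rw [log_one_add_pow_three hne, sub_add_cancel_left] at h
  refine h.congr_fun fun k ↦ ?_
  rw [← pow_mul]
  field_simp
  ring

theorem setIntegral_pow_sub_pow_div (k : ℕ) :
    ∫ x in Ioo (0 : ℝ) 1, (x ^ k - x ^ (3 * k + 2)) / (k + 1) = 2 / 3 / (k + 1) ^ 2 := by
  rw [← integral_Ioc_eq_integral_Ioo, ← intervalIntegral.integral_of_le zero_le_one,
    intervalIntegral.integral_div, intervalIntegral.integral_sub (by simp) (by simp),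
    integral_pow, integral_pow]
  push_cast
  field_simp
  ring

theorem summable_one_div_succ_sq : Summable fun n : ℕ ↦ 1 / (n + 1 : ℝ) ^ 2 := by
  exact_mod_cast (summable_nat_add_iff 1).mpr (summable_one_div_nat_pow.mpr one_lt_two)

theorem hasSum_neg_one_pow_div_succ_sq :
    HasSum (fun n : ℕ ↦ (-1) ^ n / (n + 1 : ℝ) ^ 2) ((∑' n : ℕ, 1 / (n + 1 : ℝ) ^ 2) / 2) := by
  have hZ := summable_one_div_succ_sq.hasSum
  -- `1 - (-1) ^ n` vanishes for even `n`, and for `n = 2k + 1` the term is `1 / (2 (k + 1) ^ 2)`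
  have hdiff : HasSum (fun n : ℕ ↦ (1 - (-1) ^ n) / (n + 1 : ℝ) ^ 2)
      ((∑' n : ℕ, 1 / (n + 1 : ℝ) ^ 2) / 2) := by
    rw [← zero_add (_ / 2)]
    refine HasSum.even_add_odd ?_ ?_
    · simp [pow_mul, hasSum_zero]
    · refine (hZ.div_const 2).congr_fun fun k ↦ ?_
      rw [pow_succ, pow_mul]
      push_cast
      field_simp
      ring
  have h := hZ.sub hdiff
  rw [sub_half] at h
  exact h.congr_fun fun n ↦ by ring

theorem hasSum_one_div_succ_sq_mul_choose_integral :
    HasSum (fun n : ℕ ↦ 1 / ((n + 1 : ℝ) ^ 2 * (2 * (n + 1)).choose (n + 1)))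
      (∫ x in Ioo (0 : ℝ) 1, -log (1 - x * (1 - x)) / x) := by
  have hnonneg (n : ℕ) (x : ℝ) (hx : x ∈ Ioo (0 : ℝ) 1) :
      0 ≤ x ^ n * (1 - x) ^ (n + 1) / (n + 1) :=
    div_nonneg (mul_nonneg (pow_nonneg hx.1.le n) (pow_nonneg (sub_nonneg.mpr hx.2.le) _))
      (by positivity)
  simp_rw [← setIntegral_pow_mul_one_sub_pow_succ_div]
  refine hasSum_setIntegral_of_summable_integral_norm measurableSet_Ioo
    (fun n ↦ (Continuous.integrableOn_Icc (by fun_prop)).mono_set Ioo_subset_Icc_self) ?_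
    fun x hx ↦ hasSum_pow_mul_one_sub_pow_succ_div hx.1.ne' ?_
  · refine summable_one_div_succ_sq.of_nonneg_of_le (fun n ↦ integral_nonneg fun _ ↦ norm_nonneg _)
      fun n ↦ ?_
    rw [setIntegral_congr_fun measurableSet_Ioo fun x hx ↦ norm_of_nonneg (hnonneg n x hx),
      setIntegral_pow_mul_one_sub_pow_succ_div]
    have hchoose : (1 : ℝ) ≤ (2 * (n + 1)).choose (n + 1) := by
      exact_mod_cast Nat.choose_pos (by omega)
    gcongr
    exact le_mul_of_one_le_right (by positivity) hchoose
  · rw [abs_of_nonneg (mul_nonneg hx.1.le (by linarith [hx.2]))]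
    nlinarith [hx.1, hx.2]

theorem hasSum_neg_one_pow_div_succ_sq_integral :
    HasSum (fun k : ℕ ↦ (-1) ^ k / (k + 1 : ℝ) ^ 2)
      (3 / 2 * ∫ x in Ioo (0 : ℝ) 1, -log (1 - x * (1 - x)) / x) := by
  have hnonneg (k : ℕ) (x : ℝ) (hx : x ∈ Ioo (0 : ℝ) 1) :
      0 ≤ (x ^ k - x ^ (3 * k + 2)) / (k + 1) :=
    div_nonneg (sub_nonneg.mpr (pow_le_pow_of_le_one hx.1.le hx.2.le (by omega))) (by positivity)
  have h := hasSum_setIntegral_of_summable_integral_norm (μ := volume) (s := Ioo (0 : ℝ) 1)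
    measurableSet_Ioo
    (F := fun k (x : ℝ) ↦ (-1) ^ k * ((x ^ k - x ^ (3 * k + 2)) / (k + 1)))
    (fun k ↦ (Continuous.integrableOn_Icc (by fun_prop)).mono_set Ioo_subset_Icc_self) ?_
    fun x hx ↦ hasSum_neg_one_pow_mul_pow_sub_pow_div hx.1.ne' ?_
  · simp only [integral_const_mul, setIntegral_pow_sub_pow_div] at h
    refine (h.mul_left (3 / 2)).congr_fun fun k ↦ ?_
    field_simp
  · refine (summable_one_div_succ_sq.mul_left (2 / 3)).congr fun k ↦ ?_
    simp only [norm_mul, norm_pow, norm_neg, norm_one, one_pow, one_mul]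
    rw [setIntegral_congr_fun measurableSet_Ioo fun x hx ↦ norm_of_nonneg (hnonneg k x hx),
      setIntegral_pow_sub_pow_div]
    ring
  · rw [abs_of_pos hx.1]
    exact hx.2

theorem stmt8 :
    ∑' n : ℕ, (3 : ℝ) / ((n + 1) ^ 2 * Nat.choose (2 * (n + 1)) (n + 1)) =
      ∑' n : ℕ, (1 : ℝ) / (n + 1) ^ 2 := by
  have hI := hasSum_neg_one_pow_div_succ_sq.unique hasSum_neg_one_pow_div_succ_sq_integral
  simp_rw [div_eq_mul_one_div (3 : ℝ)]
  rw [tsum_mul_left, hasSum_one_div_succ_sq_mul_choose_integral.tsum_eq]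
  linarith
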